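/- Let M be a descriptive σ-model based on a weakly transitive frame, ρ ⊆ σ, and C a cluster in M. If D ∈ [C] is a ρ-maximal cluster, then T_[C] = {t^ρ(y) | y ∈ D}; consequently |T_[C]| ≤ 2^{|ρ|}. -/

import Mathlib

/-- Modal formulas built from propositional variables (indexed by ℕ),
constants ⊤, ⊥, negation, conjunction and the modal operator ◇. -/
inductive MF : Type where
  | var : ℕ → MF
  | top : MF
  | bot : MF
  | neg : MF → MF
  | and : MF → MF → MF
  | dia : MF → MF
deriving DecidableEq

namespace MF

/-- Disjunction, as an abbreviation. -/
def or (a b : MF) : MF := neg (and (neg a) (neg b))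

/-- Implication, as an abbreviation. -/
def imp (a b : MF) : MF := MF.or (neg a) b

/-- Box, as an abbreviation: □φ := ¬◇¬φ. -/
def box (a : MF) : MF := neg (dia (neg a))

/-- The (finite) set of propositional variables occurring in a formula. -/
def sig : MF → Finset ℕ
  | var n => {n}
  | top => ∅
  | bot => ∅
  | neg a => a.sig
  | and a b => a.sig ∪ b.sig
  | dia a => a.sig

/-- The set of subformulas of a formula. -/
def subf : MF → Finset MF
  | var n => {var n}
  | top => {top}
  | bot => {bot}
  | neg a => insert (neg a) (subf a)
  | and a b => insert (and a b) (subf a ∪ subf b)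
  | dia a => insert (dia a) (subf a)

/-- The number of subformulas of a formula. -/
def nsub (a : MF) : ℕ := (subf a).card

end MF

/-- A Kripke model: a binary (accessibility) relation on worlds together with
a valuation assigning to each propositional variable a set of worlds. -/
structure KModel (W : Type) where
  R : W → W → Prop
  val : ℕ → W → Prop

/-- Weak transitivity: xRy and yRz imply x = z or xRz. -/
def WTrans {W : Type} (R : W → W → Prop) : Prop :=
  ∀ x y z : W, R x y → R y z → x = z ∨ R x z

/-- The usual Kripke truth relation. -/
def Sat {W : Type} (M : KModel W) : W → MF → Prop
  | x, .var n => M.val n x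
  | _, .top => True
  | _, .bot => False
  | x, .neg a => ¬ Sat M x a
  | x, .and a b => Sat M x a ∧ Sat M x b
  | x, .dia a => ∃ y, M.R x y ∧ Sat M y a

/-- wK4-validity: truth at every point of every model based on a weakly
transitive frame. -/
def WK4Valid (φ : MF) : Prop :=
  ∀ (W : Type) (M : KModel W), WTrans M.R → ∀ x : W, Sat M x φ

/-- The cluster of a point x: C(x) = {x} ∪ {y | xRy and yRx}. -/
def cluster {W : Type} (R : W → W → Prop) (x : W) : Set W :=
  {x} ∪ {y | R x y ∧ R y x}

/-- C R C' for sets of points: xRy for some x ∈ C, y ∈ C'. -/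
def clusterRel {W : Type} (R : W → W → Prop) (C C' : Set W) : Prop :=
  ∃ x ∈ C, ∃ y ∈ C', R x y

/-- C R y for a set C and point y: xRy for some x ∈ C. -/
def clusterRelPt {W : Type} (R : W → W → Prop) (C : Set W) (y : W) : Prop :=
  ∃ x ∈ C, R x y

/-- C R^s C': C R C' and C ≠ C'. -/
def clusterRelS {W : Type} (R : W → W → Prop) (C C' : Set W) : Prop :=
  clusterRel R C C' ∧ C ≠ C'

/-- A set is a cluster if it is the cluster of some point. -/
def IsCluster {W : Type} (R : W → W → Prop) (C : Set W) : Prop :=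
  ∃ x : W, C = cluster R x

/-- A σ-model is descriptive if it satisfies (dif), (ref) and (com). -/
def Descriptive {W : Type} (σ : Finset ℕ) (M : KModel W) : Prop :=
  (∀ x y : W, (∀ φ : MF, φ.sig ⊆ σ → (Sat M x φ ↔ Sat M y φ)) → x = y) ∧
  (∀ x y : W, M.R x y ↔ ∀ χ : MF, χ.sig ⊆ σ → Sat M y χ → Sat M x (MF.dia χ)) ∧
  (∀ Γ : Set MF, (∀ φ ∈ Γ, φ.sig ⊆ σ) →
    (∀ Γ' : Finset MF, ↑Γ' ⊆ Γ → ∃ x : W, ∀ φ ∈ Γ', Sat M x φ) →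
    ∃ x : W, ∀ φ ∈ Γ, Sat M x φ)

/-- The ρ-type of a point: the set of all ρ-formulas true at it. -/
def rType {W : Type} (M : KModel W) (ρ : Finset ℕ) (x : W) : Set MF :=
  {φ : MF | φ.sig ⊆ ρ ∧ Sat M x φ}

/-- A cluster C is ρ-maximal if whenever C R y and some x ∈ C has the same
ρ-type as y, then y ∈ C. -/
def RhoMaximal {W : Type} (M : KModel W) (ρ : Finset ℕ) (C : Set W) : Prop :=
  ∀ x ∈ C, ∀ y : W, clusterRelPt M.R C y → rType M ρ x = rType M ρ y → y ∈ C

/-- β is a ρ-bisimulation between M1 and M2: conditions (atom) and (move). -/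
def IsBisim {W1 W2 : Type} (ρ : Finset ℕ) (M1 : KModel W1) (M2 : KModel W2)
    (β : W1 → W2 → Prop) : Prop :=
  ∀ x1 x2, β x1 x2 →
    (∀ n ∈ ρ, M1.val n x1 ↔ M2.val n x2) ∧
    (∀ y1, M1.R x1 y1 → ∃ y2, M2.R x2 y2 ∧ β y1 y2) ∧
    (∀ y2, M2.R x2 y2 → ∃ y1, M1.R x1 y1 ∧ β y1 y2)

/-- M1,x1 ∼ρ M2,x2 : some ρ-bisimulation relates x1 to x2. -/
def Bisimilar {W1 W2 : Type} (ρ : Finset ℕ) (M1 : KModel W1) (x1 : W1)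
    (M2 : KModel W2) (x2 : W2) : Prop :=
  ∃ β : W1 → W2 → Prop, IsBisim ρ M1 M2 β ∧ β x1 x2

/-- One step of the chain defining ≈ on clusters: the clusters of x and y
contain points with equal ρ-types. -/
def rTypeStep {W : Type} (M : KModel W) (ρ : Finset ℕ) (x y : W) : Prop :=
  ∃ x' ∈ cluster M.R x, ∃ y' ∈ cluster M.R y, rType M ρ x' = rType M ρ y'

/-- T_[C(x)]: all ρ-types of points in clusters ≈-equivalent to C(x). -/
def TClass {W : Type} (M : KModel W) (ρ : Finset ℕ) (x : W) : Set (Set MF) :=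
  {t | ∃ y : W, Relation.ReflTransGen (rTypeStep M ρ) x y ∧
        ∃ z ∈ cluster M.R y, t = rType M ρ z}

/-!
Let `D = C(d)` be ρ-maximal. Each point of a descriptive model that ◇-sees all ρ-formulas of a type
has a successor of exactly that type, by compactness. So if `v ∈ D` and `w` mutually ◇-see each
other's ρ-types, there are `v R y R u` with `t(y) = t(w)` and `t(u) = t(v)`; ρ-maximality puts `u`
in `D`, and weak transitivity then traps `y` between two points of `D`, so `t(w)` is realised in
`D`. Following the chain of clusters from `D` this shows that every ρ-type in `T_[C]` is realised in
`D`. Finally, inside a cluster the ρ-type of a point is determined by its ρ-atoms, so `D` realises at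
most `2^|ρ|` of them.
-/

open Relation

section Cluster

variable {W : Type} {R : W → W → Prop}

lemma mem_cluster_self (x : W) : x ∈ cluster R x := Or.inl rfl

lemma mem_cluster_symm {x y : W} (h : y ∈ cluster R x) : x ∈ cluster R y :=
  h.imp Eq.symm And.symm

lemma mem_cluster_trans (hw : WTrans R) {x y z : W} (hy : y ∈ cluster R x)
    (hz : z ∈ cluster R y) : z ∈ cluster R x := by
  rcases hy with rfl | ⟨hxy, hyx⟩
  · exact hz
  rcases hz with rfl | ⟨hyz, hzy⟩
  · exact Or.inr ⟨hxy, hyx⟩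
  rcases hw x y z hxy hyz with rfl | hxz
  · exact mem_cluster_self x
  rcases hw z y x hzy hyx with rfl | hzx
  · exact mem_cluster_self z
  exact Or.inr ⟨hxz, hzx⟩

lemma cluster_eq_of_mem (hw : WTrans R) {x y : W} (h : y ∈ cluster R x) :
    cluster R y = cluster R x :=
  Set.ext fun _ => ⟨mem_cluster_trans hw h, mem_cluster_trans hw (mem_cluster_symm h)⟩

lemma mem_cluster_of_rel_of_rel (hw : WTrans R) {x y z : W} (hxy : R x y) (hyz : R y z)
    (hz : z ∈ cluster R x) : y ∈ cluster R x := by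
  rcases hz with rfl | ⟨-, hzx⟩
  · exact Or.inr ⟨hxy, hyz⟩
  rcases hw y z x hyz hzx with rfl | hyx
  · exact mem_cluster_self y
  · exact Or.inr ⟨hxy, hyx⟩

end Cluster

section Types

variable {W : Type} {M : KModel W} {ρ : Finset ℕ}

lemma sat_box {x : W} {φ : MF} : Sat M x (MF.box φ) ↔ ∀ y, M.R x y → Sat M y φ := by
  simp [MF.box, Sat]

lemma rType_eq_iff {u v : W} :
    rType M ρ u = rType M ρ v ↔ ∀ φ : MF, φ.sig ⊆ ρ → (Sat M u φ ↔ Sat M v φ) := by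
  simp only [Set.ext_iff, rType, Set.mem_ofPred_eq]
  exact ⟨fun h φ hφ => by simpa [hφ] using h φ, fun h φ => and_congr_right (h φ)⟩

lemma var_mem_rType_iff {n : ℕ} (hn : n ∈ ρ) {x : W} :
    MF.var n ∈ rType M ρ x ↔ M.val n x := by
  simp [rType, MF.sig, hn, Sat]

lemma exists_mem_rType_forall_sat (w : W) (s : Finset MF) (hs : ↑s ⊆ rType M ρ w) :
    ∃ θ ∈ rType M ρ w, ∀ v, Sat M v θ → ∀ φ ∈ s, Sat M v φ := by
  classical
  induction s using Finset.induction_on with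
  | empty => exact ⟨MF.top, ⟨Finset.empty_subset _, trivial⟩, by simp⟩
  | insert φ s _ ih =>
    rw [Finset.coe_insert, Set.insert_subset_iff] at hs
    obtain ⟨⟨hφρ, hφw⟩, hs⟩ := hs
    obtain ⟨θ, ⟨hθρ, hθw⟩, hθ⟩ := ih hs
    refine ⟨MF.and φ θ, ⟨Finset.union_subset hφρ hθρ, hφw, hθw⟩, ?_⟩
    rintro v ⟨hvφ, hvθ⟩ ψ hψ
    rcases Finset.mem_insert.mp hψ with rfl | hψ
    exacts [hvφ, hθ v hvθ ψ hψ]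

lemma rType_eq_of_rel_of_rel_of_val_iff (hw : WTrans M.R) {u v : W} (huv : M.R u v)
    (hvu : M.R v u) (hval : ∀ n ∈ ρ, M.val n u ↔ M.val n v) : rType M ρ u = rType M ρ v := by
  refine rType_eq_iff.mpr fun φ => ?_
  induction φ with
  | var n => exact fun h => hval n (h (Finset.mem_singleton_self n))
  | top | bot => exact fun _ => Iff.rfl
  | neg a ih => exact fun h => not_congr (ih h)
  | and a b iha ihb =>
    exact fun h => and_congr (iha (Finset.union_subset_left h)) (ihb (Finset.union_subset_right h))
  | dia a ih =>
    -- a successor of `u` other than `v` is also a successor of `v`, and vice versa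
    intro h
    constructor
    · rintro ⟨y, huy, hy⟩
      rcases hw v u y hvu huy with rfl | hvy
      exacts [⟨u, hvu, (ih h).mpr hy⟩, ⟨y, hvy, hy⟩]
    · rintro ⟨y, hvy, hy⟩
      rcases hw u v y huv hvy with rfl | huy
      exacts [⟨v, huv, (ih h).mp hy⟩, ⟨y, huy, hy⟩]

end Types

section Descriptive

variable {W : Type} {M : KModel W} {ρ : Finset ℕ}

def DiaSees (M : KModel W) (ρ : Finset ℕ) (a w : W) : Prop :=
  ∀ φ : MF, φ.sig ⊆ ρ → Sat M w φ → Sat M a (MF.dia φ)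

lemma DiaSees.of_rel {a w : W} (h : M.R a w) : DiaSees M ρ a w :=
  fun _ _ hφ => ⟨w, h, hφ⟩

lemma DiaSees.congr {a a' w w' : W} (ha : rType M ρ a = rType M ρ a')
    (hw : rType M ρ w = rType M ρ w') (h : DiaSees M ρ a w) : DiaSees M ρ a' w' :=
  fun φ hφ hsat => (rType_eq_iff.mp ha (MF.dia φ) hφ).mp (h φ hφ ((rType_eq_iff.mp hw φ hφ).mpr hsat))

/-- By (com), the ρ-type of `w` together with everything necessary at `a` is satisfiable; by
(ref), the satisfying point is a successor of `a`. -/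
lemma Descriptive.exists_rel_rType_eq {σ : Finset ℕ} (hρσ : ρ ⊆ σ) (hd : Descriptive σ M)
    {a w : W} (h : DiaSees M ρ a w) : ∃ y, M.R a y ∧ rType M ρ y = rType M ρ w := by
  classical
  obtain ⟨-, href, hcom⟩ := hd
  obtain ⟨y, hy⟩ := hcom (rType M ρ w ∪ {ψ | ψ.sig ⊆ σ ∧ Sat M a (MF.box ψ)})
    (by rintro φ (⟨hφ, -⟩ | ⟨hφ, -⟩); exacts [hφ.trans hρσ, hφ]) fun Γ hΓ => by
      obtain ⟨θ, ⟨hθρ, hθw⟩, hθ⟩ :=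
        exists_mem_rType_forall_sat w (Γ.filter (· ∈ rType M ρ w)) fun φ hφ =>
          (Finset.mem_filter.mp hφ).2
      obtain ⟨u, hau, hu⟩ := h θ hθρ hθw
      refine ⟨u, fun φ hφ => ?_⟩
      rcases hΓ hφ with hφw | ⟨-, hbox⟩
      exacts [hθ u hu φ (Finset.mem_filter.mpr ⟨hφ, hφw⟩), sat_box.mp hbox u hau]
  refine ⟨y, (href a y).mpr fun χ hχ hyχ => ?_, rType_eq_iff.mpr fun φ hφ => ?_⟩
  · by_contra hn
    exact hy (MF.neg χ) (Or.inr ⟨hχ, sat_box.mpr fun p hp hpχ => hn ⟨p, hp, hpχ⟩⟩) hyχ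
  · refine ⟨fun hyφ => ?_, fun hwφ => hy φ (Or.inl ⟨hφ, hwφ⟩)⟩
    by_contra hn
    exact hy (MF.neg φ) (Or.inl ⟨hφ, hn⟩) hyφ

lemma exists_mem_cluster_rType_eq_of_diaSees {σ : Finset ℕ} (hρσ : ρ ⊆ σ) (hw : WTrans M.R)
    (hd : Descriptive σ M) {d v w : W} (hmax : RhoMaximal M ρ (cluster M.R d))
    (hv : v ∈ cluster M.R d) (hvw : DiaSees M ρ v w) (hwv : DiaSees M ρ w v) :
    ∃ u ∈ cluster M.R d, rType M ρ u = rType M ρ w := by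
  obtain ⟨y, hvy, hyw⟩ := hd.exists_rel_rType_eq hρσ hvw
  obtain ⟨u, hyu, huv⟩ := hd.exists_rel_rType_eq hρσ (hwv.congr hyw.symm rfl)
  have hu : u ∈ cluster M.R d := by
    rcases hw v y u hvy hyu with rfl | hvu
    exacts [hv, hmax v hv u ⟨v, hv, hvu⟩ huv.symm]
  refine ⟨y, ?_, hyw⟩
  rw [← cluster_eq_of_mem hw hv] at hu ⊢
  exact mem_cluster_of_rel_of_rel hw hvy hyu hu

lemma exists_mem_cluster_rType_eq_of_reflTransGen {σ : Finset ℕ} (hρσ : ρ ⊆ σ)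
    (hw : WTrans M.R) (hd : Descriptive σ M) {d y : W} (hmax : RhoMaximal M ρ (cluster M.R d))
    (hy : ReflTransGen (rTypeStep M ρ) d y) :
    ∀ z ∈ cluster M.R y, ∃ u ∈ cluster M.R d, rType M ρ u = rType M ρ z := by
  induction hy with
  | refl => exact fun z hz => ⟨z, hz, rfl⟩
  | tail _ hstep ih =>
    obtain ⟨b, hb, c, hc, hbc⟩ := hstep
    obtain ⟨v, hv, hvb⟩ := ih b hb
    intro z hz
    rw [← cluster_eq_of_mem hw hc] at hz
    rcases hz with rfl | ⟨hcz, hzc⟩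
    · exact ⟨v, hv, hvb.trans hbc⟩
    · exact exists_mem_cluster_rType_eq_of_diaSees hρσ hw hd hmax hv
        ((DiaSees.of_rel hcz).congr (hvb.trans hbc).symm rfl)
        ((DiaSees.of_rel hzc).congr rfl (hvb.trans hbc).symm)

end Descriptive

instance {W : Type} {M : KModel W} {ρ : Finset ℕ} : Std.Symm (rTypeStep M ρ) where
  symm _ _ := fun ⟨x', hx', y', hy', h⟩ => ⟨y', hy', x', hx', h.symm⟩

lemma rType_image_cluster_finite_and_ncard_le {W : Type} {M : KModel W} (ρ : Finset ℕ)
    (hw : WTrans M.R) (d : W) :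
    (rType M ρ '' cluster M.R d).Finite ∧ (rType M ρ '' cluster M.R d).ncard ≤ 2 ^ ρ.card := by
  classical
  set atoms : Set MF → Finset ℕ := fun t => ρ.filter (MF.var · ∈ t)
  have hmaps : Set.MapsTo atoms (rType M ρ '' cluster M.R d) ρ.powerset :=
    fun _ _ => Finset.mem_coe.mpr (Finset.mem_powerset.mpr (Finset.filter_subset _ _))
  have hinj : Set.InjOn atoms (rType M ρ '' cluster M.R d) := by
    rintro _ ⟨u, hu, rfl⟩ _ ⟨v, hv, rfl⟩ huv
    have hval : ∀ n ∈ ρ, M.val n u ↔ M.val n v := fun n hn => by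
      simpa [atoms, hn, var_mem_rType_iff] using congrArg (n ∈ ·) huv
    rcases mem_cluster_trans hw (mem_cluster_symm hv) hu with rfl | ⟨hvu, huv⟩
    exacts [rfl, rType_eq_of_rel_of_rel_of_val_iff hw huv hvu hval]
  refine ⟨Set.Finite.of_injOn hmaps hinj (Finset.finite_toSet _), ?_⟩
  calc (rType M ρ '' cluster M.R d).ncard
      ≤ (ρ.powerset : Set (Finset ℕ)).ncard := Set.ncard_le_ncard_of_injOn atoms hmaps hinj
    _ = 2 ^ ρ.card := by rw [Set.ncard_coe_finset, Finset.card_powerset]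

/-- If D = C(d) ∈ [C(x)] is a ρ-maximal cluster, then T_[C(x)] is exactly the
set of ρ-types realised in D; consequently |T_[C(x)]| ≤ 2^{|ρ|}. -/
theorem stmt12 {W : Type} (σ ρ : Finset ℕ) (hρσ : ρ ⊆ σ) (M : KModel W)
    (hw : WTrans M.R) (hd : Descriptive σ M) (x d : W)
    (hmem : Relation.ReflTransGen (rTypeStep M ρ) x d)
    (hmax : RhoMaximal M ρ (cluster M.R d)) :
    TClass M ρ x = rType M ρ '' cluster M.R d ∧
    (TClass M ρ x).Finite ∧ (TClass M ρ x).ncard ≤ 2 ^ ρ.card := by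
  have hT : TClass M ρ x = rType M ρ '' cluster M.R d := by
    refine Set.Subset.antisymm ?_ fun t ⟨z, hz, ht⟩ => ⟨d, hmem, z, hz, ht.symm⟩
    rintro t ⟨y, hxy, z, hz, rfl⟩
    exact exists_mem_cluster_rType_eq_of_reflTransGen hρσ hw hd hmax
      ((Std.Symm.symm _ _ hmem).trans hxy) z hz
  rw [hT]
  exact ⟨rfl, rType_image_cluster_finite_and_ncard_le ρ hw d⟩
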